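/- There exists a constant C > 0, independent of τ, of J_1, J_2, of a ∈ ℐ, and of η ∈ J̃_1 + J̃_2, such that the family of sets { ⋃_{η'+η''=η, η'∈J̃_1, η''∈J̃_2} (u_{μ,J_1}^{η'} + u_{ν,J_2}^{η''}) }_{(μ,ν) ∈ k_0^{-1}({a})} is C-overlapping: for every ξ ∈ ℝ², at most C pairs (μ,ν) ∈ k_0^{-1}({a}) satisfy ξ ∈ ⋃_{η'+η''=η, η'∈J̃_1, η''∈J̃_2} (u_{μ,J_1}^{η'} + u_{ν,J_2}^{η''}). -/

import Mathlib

/-!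
Write `ξ = ξ₁ + ξ₂` with `ξ₁, ξ₂` in the two sectors, `rᵢ = ‖ξᵢ‖` and `Δ = arg ξ₁ - arg ξ₂`. The
law of cosines `‖ξ‖² = (r₁ + r₂)² - 4 r₁ r₂ sin² (Δ / 2)`, together with `r₁ + r₂ = η + O(τ⁻¹)`
and `rᵢ` known up to `τ^{-1/2}`, determines `sin (|Δ| / 2)`, hence `|Δ|`, up to `O(τ^{-1/2})`.
Since `Δ = (μ - ν) τ^{-1/2} + O(τ^{-1/2})`, this pins down `|μ - ν|` up to a bounded error, and on
the line `μ + ν = 2a` only boundedly many pairs remain.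
-/

open Set Pointwise

noncomputable def GammaSet (τ μ : ℝ) : Set ℂ :=
  {ξ : ℂ | ξ ≠ 0 ∧ μ * (Real.sqrt τ)⁻¹ ≤ ξ.arg ∧ ξ.arg < (μ + 1) * (Real.sqrt τ)⁻¹}

def calN (τ : ℝ) : Set ℤ :=
  {μ : ℤ | |(μ : ℝ)| ≤ Real.sqrt τ * (Real.pi / 8) - 1}

noncomputable def uSet (τ μ : ℝ) (J : Set ℝ) : Set (ℂ × ℝ) :=
  {p : ℂ × ℝ | |p.2 - ‖p.1‖| ≤ τ⁻¹ ∧ p.1 ∈ GammaSet τ μ ∧ ‖p.1‖ ∈ J}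

noncomputable def calI (τ : ℝ) : Set ℝ :=
  {a : ℝ | ∃ μ ∈ calN τ, ∃ ν ∈ calN τ, a = ((μ : ℝ) + (ν : ℝ)) / 2}

noncomputable def uSlice (τ μ : ℝ) (J : Set ℝ) (η : ℝ) : Set ℂ :=
  {ξ : ℂ | (ξ, η) ∈ uSet τ μ J}

open Real

theorem sub_le_two_mul_sin_sub_sin {a b : ℝ} (hb : 0 ≤ b) (hba : b ≤ a) (ha : a ≤ π / 3) :
    a - b ≤ 2 * (sin a - sin b) := by
  have hcos : ∀ x ∈ interior (Icc 0 (π / 3)), 1 / 2 ≤ deriv sin x := by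
    intro x hx
    rw [interior_Icc] at hx
    rw [Real.deriv_sin, ← cos_pi_div_three]
    exact cos_le_cos_of_nonneg_of_le_pi hx.1.le (by linarith [pi_pos]) hx.2.le
  have := (convex_Icc 0 (π / 3)).mul_sub_le_image_sub_of_le_deriv continuousOn_sin
    differentiable_sin.differentiableOn hcos b ⟨hb, hba.trans ha⟩ a ⟨hb.trans hba, ha⟩ hba
  linarith

theorem abs_sub_le_two_mul_abs_sin_sub_sin {a b : ℝ} (ha₀ : 0 ≤ a) (ha : a ≤ π / 3)
    (hb₀ : 0 ≤ b) (hb : b ≤ π / 3) : |a - b| ≤ 2 * |sin a - sin b| := by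
  rcases le_total b a with h | h
  · rw [abs_of_nonneg (sub_nonneg.2 h)]
    linarith [sub_le_two_mul_sin_sub_sin hb₀ h ha, le_abs_self (sin a - sin b)]
  · rw [abs_sub_comm, abs_of_nonneg (sub_nonneg.2 h)]
    linarith [sub_le_two_mul_sin_sub_sin ha₀ h hb, neg_abs_le (sin a - sin b)]

/- The error `s * y ^ 2` is relative to `y ^ 2`; this is what makes `y` itself stable to `O(s)`
rather than only to `O(√s)`. -/
theorem abs_sub_le_of_abs_sq_sub_sq_le {x y s K : ℝ} (hx : 0 ≤ x) (hy : 0 ≤ y) (hy₁ : y ≤ 1)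
    (hs : 0 ≤ s) (hK : 1 ≤ K) (h : |x ^ 2 - y ^ 2| ≤ K * s * (s + y ^ 2)) :
    |x - y| ≤ 2 * K * s := by
  rcases lt_or_ge (x + y) s with hxy | hxy
  · rw [abs_le]; constructor <;> nlinarith
  have hfac : |x - y| * (x + y) = |x ^ 2 - y ^ 2| := by
    rw [← abs_of_nonneg (by positivity : 0 ≤ x + y), ← abs_mul]; ring_nf
  have : |x - y| * (x + y) ≤ 2 * K * s * (x + y) := by
    have hy2 : y ^ 2 ≤ x + y := by nlinarith
    calc |x - y| * (x + y) ≤ K * s * (s + y ^ 2) := hfac ▸ h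
      _ ≤ K * s * ((x + y) + (x + y)) := by gcongr
      _ = 2 * K * s * (x + y) := by ring
  rcases (add_nonneg hx hy).eq_or_lt with h0 | h0
  · have hx0 : x = 0 := by linarith
    have hy0 : y = 0 := by linarith
    rw [hx0, hy0, sub_self, abs_zero]; positivity
  · exact le_of_mul_le_mul_right this h0

theorem Complex.sq_norm_add (ξ₁ ξ₂ : ℂ) :
    ‖ξ₁ + ξ₂‖ ^ 2 = (‖ξ₁‖ + ‖ξ₂‖) ^ 2
      - 4 * ‖ξ₁‖ * ‖ξ₂‖ * Real.sin ((ξ₁.arg - ξ₂.arg) / 2) ^ 2 := by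
  have hhalf := Real.cos_two_mul_eq_one_sub ((ξ₁.arg - ξ₂.arg) / 2)
  rw [mul_div_cancel₀ _ two_ne_zero, Real.cos_sub] at hhalf
  rw [Complex.sq_norm, Complex.normSq_apply, Complex.add_re, Complex.add_im,
    ← Complex.norm_mul_cos_arg ξ₁, ← Complex.norm_mul_cos_arg ξ₂,
    ← Complex.norm_mul_sin_arg ξ₁, ← Complex.norm_mul_sin_arg ξ₂]
  linear_combination ‖ξ₁‖ ^ 2 * Real.sin_sq_add_cos_sq ξ₁.arg
    + ‖ξ₂‖ ^ 2 * Real.sin_sq_add_cos_sq ξ₂.arg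
    + 2 * ‖ξ₁‖ * ‖ξ₂‖ * hhalf

theorem abs_sub_le_of_add_sq_sub_mul_eq {r₁ r₂ r₁' r₂' y y' s : ℝ}
    (h₁ : r₁ ∈ Icc 1 2) (h₂ : r₂ ∈ Icc 1 2) (h₁' : r₁' ∈ Icc 1 2) (h₂' : r₂' ∈ Icc 1 2)
    (hr₁ : |r₁ - r₁'| ≤ s) (hr₂ : |r₂ - r₂'| ≤ s) (hsum : |r₁ + r₂ - (r₁' + r₂')| ≤ 4 * s ^ 2)
    (hy' : 0 ≤ y')
    (h : (r₁ + r₂) ^ 2 - 4 * r₁ * r₂ * y = (r₁' + r₂') ^ 2 - 4 * r₁' * r₂' * y') :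
    |y - y'| ≤ 8 * s * (s + y') := by
  obtain ⟨h₁l, h₁u⟩ := h₁
  obtain ⟨h₂l, h₂u⟩ := h₂
  obtain ⟨h₁l', h₁u'⟩ := h₁'
  obtain ⟨h₂l', h₂u'⟩ := h₂'
  have hprod : |r₁ * r₂ - r₁' * r₂'| ≤ 4 * s := by
    rw [show r₁ * r₂ - r₁' * r₂' = r₁ * (r₂ - r₂') + r₂' * (r₁ - r₁') by ring]
    refine (abs_add_le _ _).trans ?_
    rw [abs_mul, abs_mul, abs_of_pos (by linarith : 0 < r₁), abs_of_pos (by linarith : 0 < r₂')]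
    nlinarith [abs_nonneg (r₂ - r₂'), abs_nonneg (r₁ - r₁')]
  have hsq : |(r₁ + r₂) ^ 2 - (r₁' + r₂') ^ 2| ≤ 32 * s ^ 2 := by
    rw [sq_sub_sq, abs_mul, abs_of_pos (by linarith : 0 < r₁ + r₂ + (r₁' + r₂'))]
    nlinarith [abs_nonneg (r₁ + r₂ - (r₁' + r₂'))]
  have key : 4 * (r₁ * r₂) * (y - y') =
      ((r₁ + r₂) ^ 2 - (r₁' + r₂') ^ 2) - 4 * y' * (r₁ * r₂ - r₁' * r₂') := by
    linear_combination -h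
  have hr : 1 ≤ r₁ * r₂ := by nlinarith
  calc |y - y'| ≤ r₁ * r₂ * |y - y'| := le_mul_of_one_le_left (abs_nonneg _) hr
    _ = |4 * (r₁ * r₂) * (y - y')| / 4 := by
      rw [abs_mul, abs_mul, abs_of_pos (by positivity : (0 : ℝ) < 4),
        abs_of_pos (by positivity : 0 < r₁ * r₂)]; ring
    _ ≤ (32 * s ^ 2 + 4 * y' * (4 * s)) / 4 := by
      rw [key]
      gcongr
      refine (abs_sub _ _).trans (add_le_add hsq ?_)
      rw [abs_mul, abs_of_nonneg (by positivity : 0 ≤ 4 * y')]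
      gcongr
    _ ≤ 8 * s * (s + y') := by nlinarith [(abs_nonneg _).trans hr₁]

theorem sin_sq_eq_sin_abs_sq (θ : ℝ) : sin θ ^ 2 = sin |θ| ^ 2 := by
  rcases abs_choice θ with h | h <;> simp [h]

theorem abs_abs_sub_abs_le_of_eq_sq_sub_sin_sq {r₁ r₂ r₁' r₂' Δ Δ' s : ℝ}
    (h₁ : r₁ ∈ Icc 1 2) (h₂ : r₂ ∈ Icc 1 2) (h₁' : r₁' ∈ Icc 1 2) (h₂' : r₂' ∈ Icc 1 2)
    (hr₁ : |r₁ - r₁'| ≤ s) (hr₂ : |r₂ - r₂'| ≤ s) (hsum : |r₁ + r₂ - (r₁' + r₂')| ≤ 4 * s ^ 2)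
    (hΔ : |Δ| ≤ 2 * π / 3) (hΔ' : |Δ'| ≤ 2 * π / 3)
    (h : (r₁ + r₂) ^ 2 - 4 * r₁ * r₂ * sin (Δ / 2) ^ 2
      = (r₁' + r₂') ^ 2 - 4 * r₁' * r₂' * sin (Δ' / 2) ^ 2) :
    |(|Δ| - |Δ'|)| ≤ 64 * s := by
  have hθ : |Δ / 2| ≤ π / 3 := by rw [abs_div, abs_two]; linarith
  have hθ' : |Δ' / 2| ≤ π / 3 := by rw [abs_div, abs_two]; linarith
  have hsin_nonneg : ∀ {θ : ℝ}, |θ| ≤ π / 3 → 0 ≤ sin |θ| := fun hθ =>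
    sin_nonneg_of_nonneg_of_le_pi (abs_nonneg _) (by linarith [pi_pos])
  rw [sin_sq_eq_sin_abs_sq (Δ / 2), sin_sq_eq_sin_abs_sq (Δ' / 2)] at h
  have hsq := abs_sub_le_of_add_sq_sub_mul_eq h₁ h₂ h₁' h₂' hr₁ hr₂ hsum (sq_nonneg _) h
  have hs : 0 ≤ s := (abs_nonneg _).trans hr₁
  have hsin_close := abs_sub_le_of_abs_sq_sub_sq_le (hsin_nonneg hθ) (hsin_nonneg hθ')
    (sin_le_one _) hs (by norm_num) hsq
  have hangle := abs_sub_le_two_mul_abs_sin_sub_sin (abs_nonneg _) hθ (abs_nonneg _) hθ'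
  rw [show |Δ / 2| - |Δ' / 2| = (|Δ| - |Δ'|) / 2 by rw [abs_div, abs_div, abs_two]; ring,
    abs_div, abs_two] at hangle
  linarith

theorem abs_arg_le_of_mem_GammaSet {τ μ : ℝ} (hτ : 0 < τ) (hμ : |μ| ≤ √τ * (π / 8) - 1)
    {ξ : ℂ} (hξ : ξ ∈ GammaSet τ μ) : |ξ.arg| ≤ π / 8 := by
  obtain ⟨-, hlo, hhi⟩ := hξ
  have hs : 0 < (√τ)⁻¹ := by positivity
  have hμs : |μ| * (√τ)⁻¹ ≤ π / 8 - (√τ)⁻¹ := by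
    calc |μ| * (√τ)⁻¹ ≤ (√τ * (π / 8) - 1) * (√τ)⁻¹ := by gcongr
      _ = π / 8 - (√τ)⁻¹ := by field_simp
  rw [abs_le]
  constructor <;> nlinarith [neg_abs_le μ, le_abs_self μ]

theorem abs_arg_sub_arg_sub_lt_of_mem_GammaSet {τ μ ν : ℝ} {ξ₁ ξ₂ : ℂ}
    (h₁ : ξ₁ ∈ GammaSet τ μ) (h₂ : ξ₂ ∈ GammaSet τ ν) :
    |ξ₁.arg - ξ₂.arg - (μ - ν) * (√τ)⁻¹| < (√τ)⁻¹ := by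
  obtain ⟨-, h₁lo, h₁hi⟩ := h₁
  obtain ⟨-, h₂lo, h₂hi⟩ := h₂
  rw [abs_sub_lt_iff]
  constructor <;> linarith

theorem exists_polar_of_mem_uSlice_add {τ μ ν η₁ η₂ : ℝ} {J₁ J₂ : Set ℝ} {ξ : ℂ}
    (hτ : 0 < τ) (hμ : |μ| ≤ √τ * (π / 8) - 1) (hν : |ν| ≤ √τ * (π / 8) - 1)
    (hξ : ξ ∈ uSlice τ μ J₁ η₁ + uSlice τ ν J₂ η₂) :
    ∃ r₁ ∈ J₁, ∃ r₂ ∈ J₂, ∃ Δ : ℝ,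
      |r₁ + r₂ - (η₁ + η₂)| ≤ 2 * τ⁻¹ ∧ |Δ - (μ - ν) * (√τ)⁻¹| < (√τ)⁻¹ ∧ |Δ| ≤ π / 4 ∧
      ‖ξ‖ ^ 2 = (r₁ + r₂) ^ 2 - 4 * r₁ * r₂ * sin (Δ / 2) ^ 2 := by
  obtain ⟨ξ₁, ⟨hη₁, hΓ₁, hr₁⟩, ξ₂, ⟨hη₂, hΓ₂, hr₂⟩, rfl⟩ := hξ
  refine ⟨‖ξ₁‖, hr₁, ‖ξ₂‖, hr₂, ξ₁.arg - ξ₂.arg, ?_,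
    abs_arg_sub_arg_sub_lt_of_mem_GammaSet hΓ₁ hΓ₂, ?_, Complex.sq_norm_add ξ₁ ξ₂⟩
  · rw [abs_le] at hη₁ hη₂ ⊢
    constructor <;> linarith
  · have := abs_arg_le_of_mem_GammaSet hτ hμ hΓ₁
    have := abs_arg_le_of_mem_GammaSet hτ hν hΓ₂
    calc |ξ₁.arg - ξ₂.arg| ≤ |ξ₁.arg| + |ξ₂.arg| := abs_sub _ _
      _ ≤ π / 4 := by linarith

theorem abs_sub_le_of_mem_uSlice_add {τ α₁ β₁ α₂ β₂ η₁ η₂ η₁' η₂' : ℝ} {μ ν μ' ν' : ℤ}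
    {ξ : ℂ} (hτ : 0 < τ) (hα₁ : 1 ≤ α₁) (hβ₁ : β₁ ≤ 2) (hJ₁ : β₁ - α₁ ≤ (√τ)⁻¹)
    (hα₂ : 1 ≤ α₂) (hβ₂ : β₂ ≤ 2) (hJ₂ : β₂ - α₂ ≤ (√τ)⁻¹)
    (hμ : μ ∈ calN τ) (hν : ν ∈ calN τ) (hμ' : μ' ∈ calN τ) (hν' : ν' ∈ calN τ)
    (hη : η₁ + η₂ = η₁' + η₂')
    (hξ : ξ ∈ uSlice τ μ (Icc α₁ β₁) η₁ + uSlice τ ν (Icc α₂ β₂) η₂)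
    (hξ' : ξ ∈ uSlice τ μ' (Icc α₁ β₁) η₁' + uSlice τ ν' (Icc α₂ β₂) η₂') :
    |μ - ν| ≤ |μ' - ν'| + 66 := by
  set s := (√τ)⁻¹ with hs_def
  have hs : 0 < s := by positivity
  have hs_sq : s ^ 2 = τ⁻¹ := by rw [hs_def, inv_pow, sq_sqrt hτ.le]
  obtain ⟨r₁, hr₁, r₂, hr₂, Δ, hsum, hΔμν, hΔ, hξ⟩ :=
    exists_polar_of_mem_uSlice_add hτ hμ hν hξ
  obtain ⟨r₁', hr₁', r₂', hr₂', Δ', hsum', hΔμν', hΔ', hξ'⟩ :=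
    exists_polar_of_mem_uSlice_add hτ hμ' hν' hξ'
  have hIcc : Icc α₁ β₁ ⊆ Icc 1 2 ∧ Icc α₂ β₂ ⊆ Icc 1 2 :=
    ⟨Icc_subset_Icc hα₁ hβ₁, Icc_subset_Icc hα₂ hβ₂⟩
  have hangle : |(|Δ| - |Δ'|)| ≤ 64 * s := by
    refine abs_abs_sub_abs_le_of_eq_sq_sub_sin_sq (hIcc.1 hr₁) (hIcc.2 hr₂) (hIcc.1 hr₁')
      (hIcc.2 hr₂') ?_ ?_ ?_ (by linarith [pi_pos]) (by linarith [pi_pos]) (hξ.symm.trans hξ')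
    · rw [abs_le]; constructor <;> linarith [hr₁.1, hr₁.2, hr₁'.1, hr₁'.2]
    · rw [abs_le]; constructor <;> linarith [hr₂.1, hr₂.2, hr₂'.1, hr₂'.2]
    · rw [abs_le] at hsum hsum' ⊢; constructor <;> linarith
  have hcell : ∀ {Δ : ℝ} {m n : ℤ}, |Δ - (m - n : ℝ) * s| < s →
      |(|Δ| - |(m - n : ℤ)| * s)| ≤ s := fun h => by
      have := (abs_abs_sub_abs_le_abs_sub _ _).trans h.le
      rwa [abs_mul, abs_of_pos hs, ← Int.cast_sub, ← Int.cast_abs] at this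
  have h₁ := hcell hΔμν
  have h₂ := hcell hΔμν'
  rw [abs_le] at hangle h₁ h₂
  have : ((|μ - ν| : ℤ) : ℝ) ≤ ((|μ' - ν'| : ℤ) : ℝ) + 66 :=
    le_of_mul_le_mul_right (by linarith) hs
  exact_mod_cast this

theorem finite_and_ncard_le_of_abs_sub_le {S : Set (ℤ × ℤ)} (K : ℕ)
    (hsum : ∀ p ∈ S, ∀ q ∈ S, p.1 + p.2 = q.1 + q.2)
    (hdiff : ∀ p ∈ S, ∀ q ∈ S, |p.1 - p.2| ≤ |q.1 - q.2| + K) :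
    S.Finite ∧ S.ncard ≤ 4 * K + 2 := by
  rcases S.eq_empty_or_nonempty with rfl | ⟨q, hq⟩
  · simp
  set m := |q.1 - q.2|
  set T : Set ℤ := Icc (m - K) (m + K) ∪ Icc (-m - K) (-m + K)
  have hmaps : MapsTo (fun p : ℤ × ℤ => p.1 - p.2) S T := by
    intro p hp
    have := hdiff p hp q hq
    have := hdiff q hq p hp
    simp only [T, mem_union, mem_Icc]
    rcases abs_cases (p.1 - p.2) with ⟨h, -⟩ | ⟨h, -⟩ <;> omega
  have hinj : InjOn (fun p : ℤ × ℤ => p.1 - p.2) S := by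
    intro p hp p' hp' h
    have := hsum p hp p' hp'
    simp only at h
    ext <;> omega
  have hT : T.Finite := (finite_Icc _ _).union (finite_Icc _ _)
  refine ⟨hT.of_injOn hmaps hinj, ?_⟩
  calc S.ncard ≤ T.ncard := ncard_le_ncard_of_injOn _ hmaps hinj hT
    _ ≤ (Icc (m - K) (m + K)).ncard + (Icc (-m - K) (-m + K)).ncard := ncard_union_le _ _
    _ = 4 * K + 2 := by
      rw [← Finset.coe_Icc, ← Finset.coe_Icc, ncard_coe_finset, ncard_coe_finset,
        Int.card_Icc, Int.card_Icc]
      omega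

theorem statement4 :
    ∃ C : ℕ, 0 < C ∧
      ∀ τ : ℝ, (10 : ℝ) ^ 6 < τ →
      ∀ α₁ β₁ α₂ β₂ : ℝ,
        1 ≤ α₁ → α₁ ≤ β₁ → β₁ ≤ 2 → β₁ - α₁ ≤ (Real.sqrt τ)⁻¹ →
        1 ≤ α₂ → α₂ ≤ β₂ → β₂ ≤ 2 → β₂ - α₂ ≤ (Real.sqrt τ)⁻¹ →
        ∀ a ∈ calI τ,
        ∀ η ∈ Icc (α₁ + α₂ - 2 * τ⁻¹) (β₁ + β₂ + 2 * τ⁻¹),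
        ∀ ξ : ℂ,
          {p : ℤ × ℤ | p.1 ∈ calN τ ∧ p.2 ∈ calN τ ∧
              ((p.1 : ℝ) + (p.2 : ℝ)) / 2 = a ∧
              (∃ η' η'' : ℝ, η' ∈ Icc (α₁ - τ⁻¹) (β₁ + τ⁻¹) ∧
                η'' ∈ Icc (α₂ - τ⁻¹) (β₂ + τ⁻¹) ∧ η' + η'' = η ∧
                ξ ∈ uSlice τ (p.1 : ℝ) (Icc α₁ β₁) η' +
                    uSlice τ (p.2 : ℝ) (Icc α₂ β₂) η'')}.Finite ∧
          {p : ℤ × ℤ | p.1 ∈ calN τ ∧ p.2 ∈ calN τ ∧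
              ((p.1 : ℝ) + (p.2 : ℝ)) / 2 = a ∧
              (∃ η' η'' : ℝ, η' ∈ Icc (α₁ - τ⁻¹) (β₁ + τ⁻¹) ∧
                η'' ∈ Icc (α₂ - τ⁻¹) (β₂ + τ⁻¹) ∧ η' + η'' = η ∧
                ξ ∈ uSlice τ (p.1 : ℝ) (Icc α₁ β₁) η' +
                    uSlice τ (p.2 : ℝ) (Icc α₂ β₂) η'')}.ncard ≤ C := by
  refine ⟨4 * 66 + 2, by norm_num,
    fun τ hτ α₁ β₁ α₂ β₂ hα₁ _ hβ₁ hJ₁ hα₂ _ hβ₂ hJ₂ a _ η _ ξ => ?_⟩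
  have hτ₀ : 0 < τ := by linarith
  refine finite_and_ncard_le_of_abs_sub_le 66 ?_ ?_
  · rintro p ⟨-, -, hp, -⟩ q ⟨-, -, hq, -⟩
    have : ((p.1 + p.2 : ℤ) : ℝ) = ((q.1 + q.2 : ℤ) : ℝ) := by push_cast; linarith
    exact_mod_cast this
  · rintro p ⟨hp₁, hp₂, -, η₁, η₂, -, -, hη, hp⟩ q ⟨hq₁, hq₂, -, η₁', η₂', -, -, hη', hq⟩
    exact abs_sub_le_of_mem_uSlice_add hτ₀ hα₁ hβ₁ hJ₁ hα₂ hβ₂ hJ₂ hp₁ hp₂ hq₁ hq₂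
      (hη.trans hη'.symm) hp hq
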